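/- Reverse Ando inequality: let Φ be a positive unital linear map, t ∈ (0,1), and A, B positive invertible with m·I ≤ A, B ≤ M·I for 0 < m < M. Then Φ(A) #_t Φ(B) ≤ ((m+M)²/(4mM)) · Φ(A #_t B). -/

import Mathlib

/-!
Writing `X #ₜ Y = X^{1/2} C^t X^{1/2}` with `C = X^{-1/2} Y X^{-1/2}`, both the weighted
arithmetic-geometric mean inequality `X #ₜ Y ≤ (1-t) X + t Y` and its reverse
`(1-t) X + t Y ≤ K · (X #ₜ Y)`, with `K = (m+M)²/(4mM)` the Kantorovich constant, are congruences
by `X^{1/2}` of the scalar inequalities `c^t ≤ 1 - t + t c` and `1 - t + t c ≤ K c^t` applied to `C`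
through the functional calculus; the reverse one needs the spectrum of `C` in `[m/M, M/m]`.
Since `Φ` is monotone and unital,
`Φ(A) #ₜ Φ(B) ≤ (1-t) Φ(A) + t Φ(B) = Φ((1-t) A + t B) ≤ K · Φ(A #ₜ B)`.
-/

/-- The `t`-weighted geometric mean `A #_t B = A^{1/2} (A^{-1/2} B A^{-1/2})^t A^{1/2}`,
defined via the continuous functional calculus real power. -/
noncomputable def geomMean {H : Type*} [NormedAddCommGroup H] [InnerProductSpace ℂ H]
    [CompleteSpace H] (A B : H →L[ℂ] H) (t : ℝ) : H →L[ℂ] H :=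
  A ^ ((1 : ℝ) / 2) * (A ^ (-(1 : ℝ) / 2) * B * A ^ (-(1 : ℝ) / 2)) ^ t * A ^ ((1 : ℝ) / 2)

noncomputable def kantorovichConst (m M : ℝ) : ℝ := (m + M) ^ 2 / (4 * m * M)

namespace Real

lemma rpow_le_one_sub_add_mul {x t : ℝ} (hx : 0 ≤ x) (ht0 : 0 ≤ t) (ht1 : t ≤ 1) :
    x ^ t ≤ 1 - t + t * x := by
  have h := rpow_one_add_le_one_add_mul_self (s := x - 1) (by linarith) ht0 ht1
  rw [add_sub_cancel] at h
  linarith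

lemma one_sub_add_mul_mul_le_kantorovichConst_mul {m M x : ℝ} (hm : 0 < m) (hM : 0 < M)
    (hx1 : m / M ≤ x) (hx2 : x ≤ M / m) (t : ℝ) :
    (1 - t + t * x) * ((1 - t) * x + t) ≤ kantorovichConst m M * x := by
  have hMx : m ≤ M * x := by rwa [div_le_iff₀' hM] at hx1
  have hmx : m * x ≤ M := by rwa [le_div_iff₀' hm] at hx2
  have hsq : m * M * (x - 1) ^ 2 ≤ x * (M - m) ^ 2 := by
    nlinarith [mul_nonneg (sub_nonneg.2 hMx) (sub_nonneg.2 hmx)]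
  have ht : t * (1 - t) ≤ 1 / 4 := by nlinarith [sq_nonneg (2 * t - 1)]
  have hmM : 0 < 4 * m * M := by positivity
  calc (1 - t + t * x) * ((1 - t) * x + t) = x + t * (1 - t) * (x - 1) ^ 2 := by ring
    _ ≤ x + 1 / 4 * (x - 1) ^ 2 := by gcongr
    _ ≤ x + x * (M - m) ^ 2 / (4 * m * M) := by
        rw [add_le_add_iff_left, le_div_iff₀ hmM]
        nlinarith
    _ = kantorovichConst m M * x := by
        unfold kantorovichConst
        field_simp
        ring

lemma one_sub_add_mul_le_kantorovichConst_mul_rpow {m M x t : ℝ} (hm : 0 < m) (hM : 0 < M)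
    (hx1 : m / M ≤ x) (hx2 : x ≤ M / m) (ht0 : 0 ≤ t) (ht1 : t ≤ 1) :
    1 - t + t * x ≤ kantorovichConst m M * x ^ t := by
  have hx : 0 < x := (div_pos hm hM).trans_le hx1
  have hK : 0 ≤ kantorovichConst m M := by unfold kantorovichConst; positivity
  have hdual : x ^ (1 - t) ≤ (1 - t) * x + t := by
    linarith [rpow_le_one_sub_add_mul hx.le (sub_nonneg.2 ht1) (by linarith : 1 - t ≤ 1)]
  have hpos : 0 < (1 - t) * x + t := by
    rcases ht0.eq_or_lt with rfl | ht0 <;> nlinarith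
  refine le_of_mul_le_mul_right ?_ hpos
  calc (1 - t + t * x) * ((1 - t) * x + t) ≤ kantorovichConst m M * x :=
        one_sub_add_mul_mul_le_kantorovichConst_mul hm hM hx1 hx2 t
    _ = kantorovichConst m M * (x ^ t * x ^ (1 - t)) := by
        rw [← rpow_add hx, add_sub_cancel, rpow_one]
    _ ≤ kantorovichConst m M * x ^ t * ((1 - t) * x + t) := by
        rw [mul_assoc]
        gcongr

end Real

section CStarAlgebra

variable {E : Type*} [CStarAlgebra E] [PartialOrder E] [StarOrderedRing E]

omit [PartialOrder E] [StarOrderedRing E] in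
lemma cfc_const_add_const_mul_id {a : E} (ha : IsSelfAdjoint a) (s t : ℝ) :
    cfc (fun x : ℝ => s + t * x) a = s • (1 : E) + t • a := by
  rw [cfc_add .., cfc_const s a ha, cfc_const_mul .., cfc_id' ℝ a ha,
    Algebra.algebraMap_eq_smul_one]

lemma CFC.rpow_le_one_sub_smul_one_add_smul {a : E} (ha : 0 ≤ a) {t : ℝ} (ht0 : 0 ≤ t)
    (ht1 : t ≤ 1) : a ^ t ≤ (1 - t) • (1 : E) + t • a := by
  rw [CFC.rpow_eq_cfc_real ha, ← cfc_const_add_const_mul_id ha.isSelfAdjoint]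
  refine cfc_mono (fun x hx => Real.rpow_le_one_sub_add_mul ?_ ht0 ht1) ?_
  · exact spectrum_nonneg_of_nonneg ha hx
  · exact fun x _ => (Real.continuousAt_rpow_const x t (Or.inr ht0)).continuousWithinAt

lemma CFC.one_sub_smul_one_add_smul_le_kantorovichConst_smul_rpow {a : E} {m M t : ℝ}
    (hm : 0 < m) (hM : 0 < M) (h1 : (m / M) • (1 : E) ≤ a) (h2 : a ≤ (M / m) • (1 : E))
    (ht0 : 0 ≤ t) (ht1 : t ≤ 1) :
    (1 - t) • (1 : E) + t • a ≤ kantorovichConst m M • a ^ t := by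
  have ha : 0 ≤ a := (smul_nonneg (div_pos hm hM).le zero_le_one).trans h1
  rw [← Algebra.algebraMap_eq_smul_one] at h1 h2
  have hsp1 := (algebraMap_le_iff_le_spectrum ha.isSelfAdjoint).1 h1
  have hsp2 := (le_algebraMap_iff_spectrum_le ha.isSelfAdjoint).1 h2
  have hcont : ContinuousOn (fun x : ℝ => x ^ t) (spectrum ℝ a) :=
    fun x _ => (Real.continuousAt_rpow_const x t (Or.inr ht0)).continuousWithinAt
  rw [CFC.rpow_eq_cfc_real ha, ← cfc_const_mul _ _ _ hcont,
    ← cfc_const_add_const_mul_id ha.isSelfAdjoint]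
  exact cfc_mono (fun x hx => Real.one_sub_add_mul_le_kantorovichConst_mul_rpow hm hM
    (hsp1 x hx) (hsp2 x hx) ht0 ht1)

lemma CFC.rpow_half_mul_rpow_half {X : E} (hX : 0 ≤ X) :
    X ^ ((1 : ℝ) / 2) * X ^ ((1 : ℝ) / 2) = X := by
  rw [← CFC.sqrt_eq_rpow, CFC.sqrt_mul_sqrt_self X hX]

lemma CFC.rpow_neg_half_mul_mul_rpow_neg_half {X : E} (hX : IsStrictlyPositive X) :
    X ^ (-(1 : ℝ) / 2) * X * X ^ (-(1 : ℝ) / 2) = 1 := by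
  rw [neg_div]
  exact CFC.conjugate_rpow_neg_one_half X hX

lemma CFC.rpow_half_conj_rpow_neg_half_conj {X : E} (hX : IsStrictlyPositive X) (Y : E) :
    X ^ ((1 : ℝ) / 2) * (X ^ (-(1 : ℝ) / 2) * Y * X ^ (-(1 : ℝ) / 2)) * X ^ ((1 : ℝ) / 2) = Y := by
  rw [neg_div]
  simp only [← mul_assoc, CFC.rpow_mul_rpow_neg _ hX, one_mul]
  rw [mul_assoc, CFC.rpow_neg_mul_rpow _ hX, mul_one]

lemma CFC.rpow_half_conj_smul_one_add_smul {X : E} (hX : IsStrictlyPositive X) (Y : E)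
    (s t : ℝ) :
    X ^ ((1 : ℝ) / 2) * (s • (1 : E) + t • (X ^ (-(1 : ℝ) / 2) * Y * X ^ (-(1 : ℝ) / 2))) *
      X ^ ((1 : ℝ) / 2) = s • X + t • Y := by
  rw [mul_add, add_mul, mul_smul_comm, smul_mul_assoc, mul_smul_comm, smul_mul_assoc, mul_one,
    CFC.rpow_half_mul_rpow_half hX.nonneg, CFC.rpow_half_conj_rpow_neg_half_conj hX]

lemma div_smul_one_le_conj {c X Y : E} (hc : IsSelfAdjoint c) (hcXc : c * X * c = 1)
    {m M : ℝ} (hm : 0 ≤ m) (hM : 0 < M) (hX : X ≤ M • 1) (hY : m • 1 ≤ Y) :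
    (m / M) • (1 : E) ≤ c * Y * c := by
  have hcc : (1 : E) ≤ M • (c * c) := by
    simpa [hcXc] using hc.conjugate_le_conjugate hX
  calc (m / M) • (1 : E) ≤ (m / M) • (M • (c * c)) := by gcongr
    _ = c * (m • 1) * c := by
        rw [smul_smul, div_mul_cancel₀ _ hM.ne']
        simp
    _ ≤ c * Y * c := hc.conjugate_le_conjugate hY

lemma conj_le_div_smul_one {c X Y : E} (hc : IsSelfAdjoint c) (hcXc : c * X * c = 1)
    {m M : ℝ} (hm : 0 < m) (hM : 0 ≤ M) (hX : m • 1 ≤ X) (hY : Y ≤ M • 1) :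
    c * Y * c ≤ (M / m) • (1 : E) := by
  have hcc : m • (c * c) ≤ (1 : E) := by
    simpa [hcXc] using hc.conjugate_le_conjugate hX
  calc c * Y * c ≤ c * (M • 1) * c := hc.conjugate_le_conjugate hY
    _ = (M / m) • (m • (c * c)) := by
        rw [smul_smul, div_mul_cancel₀ _ hm.ne']
        simp
    _ ≤ (M / m) • (1 : E) := by gcongr

lemma CStarAlgebra.geom_mean_le_arith_mean_weighted {X Y : E} (hX : IsStrictlyPositive X)
    (hY : 0 ≤ Y) {t : ℝ} (ht0 : 0 ≤ t) (ht1 : t ≤ 1) :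
    X ^ ((1 : ℝ) / 2) * (X ^ (-(1 : ℝ) / 2) * Y * X ^ (-(1 : ℝ) / 2)) ^ t * X ^ ((1 : ℝ) / 2) ≤
      (1 - t) • X + t • Y := by
  rw [← CFC.rpow_half_conj_smul_one_add_smul hX]
  exact conjugate_le_conjugate_of_nonneg (CFC.rpow_le_one_sub_smul_one_add_smul
    (conjugate_nonneg_of_nonneg hY CFC.rpow_nonneg) ht0 ht1) (CFC.rpow_nonneg (a := X))

lemma CStarAlgebra.arith_mean_le_kantorovichConst_smul_geom_mean_weighted {X Y : E} {m M : ℝ}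
    (hm : 0 < m) (hM : 0 < M) (hX1 : m • (1 : E) ≤ X) (hX2 : X ≤ M • (1 : E))
    (hY1 : m • (1 : E) ≤ Y) (hY2 : Y ≤ M • (1 : E)) {t : ℝ} (ht0 : 0 ≤ t) (ht1 : t ≤ 1) :
    (1 - t) • X + t • Y ≤ kantorovichConst m M •
      (X ^ ((1 : ℝ) / 2) * (X ^ (-(1 : ℝ) / 2) * Y * X ^ (-(1 : ℝ) / 2)) ^ t *
        X ^ ((1 : ℝ) / 2)) := by
  have hX : IsStrictlyPositive X := (isStrictlyPositive_one.smul hm).of_le hX1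
  have hq : IsSelfAdjoint (X ^ (-(1 : ℝ) / 2)) := IsSelfAdjoint.of_nonneg CFC.rpow_nonneg
  have hqXq := CFC.rpow_neg_half_mul_mul_rpow_neg_half hX
  have hconj := conjugate_le_conjugate_of_nonneg
    (CFC.one_sub_smul_one_add_smul_le_kantorovichConst_smul_rpow hm hM
      (div_smul_one_le_conj hq hqXq hm.le hM hX2 hY1)
      (conj_le_div_smul_one hq hqXq hm hM.le hX1 hY2) ht0 ht1)
    (CFC.rpow_nonneg (a := X) (y := (1 : ℝ) / 2))
  rwa [CFC.rpow_half_conj_smul_one_add_smul hX, mul_smul_comm, smul_mul_assoc] at hconj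

end CStarAlgebra

theorem reverse_ando_inequality_general
    {H K : Type*} [NormedAddCommGroup H] [InnerProductSpace ℂ H] [CompleteSpace H]
    [NormedAddCommGroup K] [InnerProductSpace ℂ K] [CompleteSpace K]
    (Φ : (H →L[ℂ] H) →ₗ[ℂ] (K →L[ℂ] K))
    (hΦ1 : Φ 1 = 1) (hΦpos : ∀ a : H →L[ℂ] H, 0 ≤ a → 0 ≤ Φ a)
    (A B : H →L[ℂ] H)
    (m M : ℝ) (hm : 0 < m) (hmM : m < M)
    (hA1 : m • (1 : H →L[ℂ] H) ≤ A) (hA2 : A ≤ M • (1 : H →L[ℂ] H))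
    (hB1 : m • (1 : H →L[ℂ] H) ≤ B) (hB2 : B ≤ M • (1 : H →L[ℂ] H))
    (t : ℝ) (ht0 : 0 < t) (ht1 : t < 1) :
    geomMean (Φ A) (Φ B) t ≤ ((m + M) ^ 2 / (4 * m * M)) • Φ (geomMean A B t) := by
  have hM : 0 < M := hm.trans hmM
  have hΦmono : Monotone Φ := (PositiveLinearMap.mk₀ Φ hΦpos).monotone'
  have hΦsmul (r : ℝ) (X : H →L[ℂ] H) : Φ (r • X) = r • Φ X := Φ.map_smul_of_tower r X
  have hΦbound {r : ℝ} {X : H →L[ℂ] H} (h : r • 1 ≤ X) : r • 1 ≤ Φ X := by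
    simpa [hΦsmul, hΦ1] using hΦmono h
  have hΦA : IsStrictlyPositive (Φ A) := (isStrictlyPositive_one.smul hm).of_le (hΦbound hA1)
  have hΦB : IsStrictlyPositive (Φ B) := (isStrictlyPositive_one.smul hm).of_le (hΦbound hB1)
  calc geomMean (Φ A) (Φ B) t ≤ (1 - t) • Φ A + t • Φ B :=
        CStarAlgebra.geom_mean_le_arith_mean_weighted hΦA hΦB.nonneg ht0.le ht1.le
    _ = Φ ((1 - t) • A + t • B) := by rw [map_add, hΦsmul, hΦsmul]
    _ ≤ Φ (kantorovichConst m M • geomMean A B t) := hΦmono <|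
        CStarAlgebra.arith_mean_le_kantorovichConst_smul_geom_mean_weighted hm hM hA1 hA2 hB1 hB2
          ht0.le ht1.le
    _ = ((m + M) ^ 2 / (4 * m * M)) • Φ (geomMean A B t) := hΦsmul _ _

/-- Reverse Ando inequality: for a positive unital linear map `Φ`, `t ∈ (0,1)`, and
positive invertible `A, B` with `m • 1 ≤ A, B ≤ M • 1`, `0 < m < M`, one has
`Φ(A) #ₜ Φ(B) ≤ ((m+M)²/(4mM)) • Φ(A #ₜ B)`. -/
theorem reverse_ando_inequality
    {H K : Type*} [NormedAddCommGroup H] [InnerProductSpace ℂ H] [CompleteSpace H]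
    [NormedAddCommGroup K] [InnerProductSpace ℂ K] [CompleteSpace K]
    (Φ : (H →L[ℂ] H) →ₗ[ℂ] (K →L[ℂ] K))
    (hΦ1 : Φ 1 = 1) (hΦpos : ∀ a : H →L[ℂ] H, 0 ≤ a → 0 ≤ Φ a)
    (A B : H →L[ℂ] H) (hA : 0 ≤ A) (hB : 0 ≤ B)
    (hAinv : Invertible A) (hBinv : Invertible B)
    (m M : ℝ) (hm : 0 < m) (hmM : m < M)
    (hA1 : m • (1 : H →L[ℂ] H) ≤ A) (hA2 : A ≤ M • (1 : H →L[ℂ] H))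
    (hB1 : m • (1 : H →L[ℂ] H) ≤ B) (hB2 : B ≤ M • (1 : H →L[ℂ] H))
    (t : ℝ) (ht0 : 0 < t) (ht1 : t < 1) :
    geomMean (Φ A) (Φ B) t ≤ ((m + M) ^ 2 / (4 * m * M)) • Φ (geomMean A B t) :=
  reverse_ando_inequality_general Φ hΦ1 hΦpos A B m M hm hmM hA1 hA2 hB1 hB2 t ht0 ht1
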